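/- arXiv:2603.14556 — 4 statements merged into one kernel-verified Lean document; each statement's English description precedes it below -/
import Mathlib

section
/- Let f : H → G be a simple virtual endomorphism, i.e., H ≤ G has finite index > 1 and the only normal subgroup K of G with K ⊆ H and f(K) ⊆ K is trivial. Let A be a group, π : A ⋊ H → H the projection killing A, i : G → A ⋊ G the inclusion, and β = i ∘ f ∘ π : A ⋊ H → A ⋊ G (where the action of H on A is the restriction of an action of G on A). If M is a normal subgroup of A ⋊ G with M ⊆ A ⋊ H and β(M) ⊆ M, then M ⊆ A. -/
/-! The projection `K` of `M` to `G` is normal in `G`, lies in `H`, and is `f`-invariant, because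
`β` maps `m ∈ M` to `f(m.right)` viewed in `A ⋊ G`. Simplicity of `f` forces `K = 1`. -/

open SemidirectProduct

theorem stmt_7_general {G A : Type*} [Group G] [Group A] (φ : G →* MulAut A)
    (H : Subgroup G)
    (f : H →* G)
    (hsimple : ∀ K : Subgroup G, K.Normal → ∀ hKH : K ≤ H,
      (∀ (k : G) (hk : k ∈ K), f ⟨k, hKH hk⟩ ∈ K) → K = ⊥)
    (M : Subgroup (A ⋊[φ] G)) (hM : M.Normal)
    (hMH : ∀ m, m ∈ M → (m : A ⋊[φ] G).right ∈ H)
    (hβ : ∀ (m : A ⋊[φ] G) (hm : m ∈ M),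
      (SemidirectProduct.inr (f ⟨m.right, hMH m hm⟩) : A ⋊[φ] G) ∈ M) :
    ∀ m ∈ M, (m : A ⋊[φ] G).right = 1 := by
  set K := M.map (rightHom : A ⋊[φ] G →* G)
  have hKH : K ≤ H := by
    rintro _ ⟨m, hm, rfl⟩
    exact hMH m hm
  have hfK : ∀ (k : G) (hk : k ∈ K), f ⟨k, hKH hk⟩ ∈ K := by
    rintro _ ⟨m, hm, rfl⟩
    exact ⟨_, hβ m hm, rightHom_inr _⟩
  have hK : K = ⊥ := hsimple K (hM.map _ rightHom_surjective) hKH hfK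
  intro m hm
  have hmK : m.right ∈ K := Subgroup.mem_map_of_mem rightHom hm
  rwa [hK, Subgroup.mem_bot] at hmK

/-- Let `f : H → G` be a simple virtual endomorphism (`H` of finite index `> 1` in `G`,
and the only normal subgroup `K ⊴ G` with `K ≤ H` and `f(K) ≤ K` is trivial). Let `G`
act on a group `A`, and let `β : A ⋊ H → A ⋊ G` be `i ∘ f ∘ π`. If `M ⊴ A ⋊ G` with
`M ≤ A ⋊ H` and `β(M) ≤ M`, then `M ≤ A` (i.e. the `G`-component of every element of
`M` is trivial). -/
theorem stmt_7 {G A : Type*} [Group G] [Group A] (φ : G →* MulAut A)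
    (H : Subgroup G) (hfi : H.FiniteIndex) (hne : H ≠ ⊤)
    (f : H →* G)
    (hsimple : ∀ K : Subgroup G, K.Normal → ∀ hKH : K ≤ H,
      (∀ (k : G) (hk : k ∈ K), f ⟨k, hKH hk⟩ ∈ K) → K = ⊥)
    (M : Subgroup (A ⋊[φ] G)) (hM : M.Normal)
    (hMH : ∀ m, m ∈ M → (m : A ⋊[φ] G).right ∈ H)
    (hβ : ∀ (m : A ⋊[φ] G) (hm : m ∈ M),
      (SemidirectProduct.inr (f ⟨m.right, hMH m hm⟩) : A ⋊[φ] G) ∈ M) :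
    ∀ m ∈ M, (m : A ⋊[φ] G).right = 1 :=
  stmt_7_general φ H f hsimple M hM hMH hβ
end

section
/- Let r and s be nonzero integers. The subgroup s·ℤ[1/r] of the additive group ℤ[1/r] has index at most |s| (in fact, the index equals s divided by the largest factor of s composed of primes dividing r; in particular the index is finite). -/
/-! The powers of `r` modulo `s` are eventually periodic, so `r ^ n ≡ r ^ t [ZMOD s]` for some
`t + k ≤ n`, and then `r⁻¹ ^ k - r ^ (n - t - k) = (r ^ t - r ^ n) / r ^ (t + k) ∈ s·ℤ[1/r]`.
Hence `ℤ[1/r] = s·ℤ[1/r] + ℤ`, so the index of `s·ℤ[1/r]` in `ℤ[1/r]` is that of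
`s·ℤ[1/r] ∩ ℤ` in `ℤ`, which divides `|s|` because `s ∈ s·ℤ[1/r]`. -/

theorem exists_pow_eq_pow_of_finite {M : Type*} [Monoid M] [Finite M] (x : M) (k : ℕ) :
    ∃ t n : ℕ, t + k ≤ n ∧ x ^ n = x ^ t := by
  obtain ⟨i, j, hij, h⟩ := Finite.exists_ne_map_eq_of_infinite fun i : ℕ => x ^ (i * (k + 1))
  rcases hij.lt_or_gt with hlt | hlt
  · exact ⟨i * (k + 1), j * (k + 1), by nlinarith, h.symm⟩
  · exact ⟨j * (k + 1), i * (k + 1), by nlinarith, h⟩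

theorem Int.exists_dvd_pow_sub_pow (r : ℤ) {s : ℤ} (hs : s ≠ 0) (k : ℕ) :
    ∃ t n : ℕ, t + k ≤ n ∧ s ∣ r ^ n - r ^ t := by
  have : NeZero s.natAbs := ⟨Int.natAbs_ne_zero.mpr hs⟩
  obtain ⟨t, n, hle, h⟩ := exists_pow_eq_pow_of_finite (r : ZMod s.natAbs) k
  refine ⟨t, n, hle, ?_⟩
  rw [← Int.natAbs_dvd, ← ZMod.intCast_eq_intCast_iff_dvd_sub]
  push_cast
  exact h.symm

theorem AddSubgroup.relIndex_dvd_of_eq_sup_range {G : Type*} [AddCommGroup G]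
    {H K : AddSubgroup G} {f : ℤ →+ G} (hK : K = H ⊔ f.range) {n : ℤ} (hn : f n ∈ H) :
    H.relIndex K ∣ n.natAbs := by
  rw [hK, relIndex_sup_left, ← index_comap, ← Int.index_zmultiples]
  exact index_dvd_of_le (zmultiples_le_of_mem hn)

abbrev invPowSpan {K : Type*} [Field K] (r : K) : Submodule ℤ K :=
  Submodule.span ℤ (Set.range fun k : ℕ => r⁻¹ ^ k)

theorem intCast_mul_inv_pow_mem_invPowSpan {K : Type*} [Field K] (r : K) (a : ℤ) (k : ℕ) :
    (a : K) * r⁻¹ ^ k ∈ invPowSpan r := by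
  simpa only [zsmul_eq_mul] using (invPowSpan r).smul_mem a (Submodule.subset_span ⟨k, rfl⟩)

theorem inv_pow_mem_map_mulLeft_sup_range_intCast {K : Type*} [Field K] {r s : ℤ}
    (hr : (r : K) ≠ 0) (hs : s ≠ 0) (k : ℕ) :
    (r : K)⁻¹ ^ k ∈ (invPowSpan (r : K)).toAddSubgroup.map (AddMonoidHom.mulLeft (s : K)) ⊔
      (Int.castAddHom K).range := by
  obtain ⟨t, n, hle, v, hv⟩ := Int.exists_dvd_pow_sub_pow r hs k
  obtain ⟨d, rfl⟩ := Nat.exists_eq_add_of_le hle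
  have hv' := congrArg (Int.cast : ℤ → K) hv
  push_cast at hv'
  have key : (r : K)⁻¹ ^ k = s * ((-v : ℤ) * (r : K)⁻¹ ^ (t + k)) + ((r ^ d : ℤ) : K) := by
    rw [inv_pow, inv_pow]
    field_simp
    push_cast
    linear_combination (-(r : K) ^ k) * hv'
  rw [key]
  exact AddSubgroup.add_mem_sup ⟨_, intCast_mul_inv_pow_mem_invPowSpan _ _ _, rfl⟩ ⟨_, rfl⟩

theorem invPowSpan_toAddSubgroup_eq_map_mulLeft_sup_range_intCast {K : Type*} [Field K]
    {r s : ℤ} (hr : (r : K) ≠ 0) (hs : s ≠ 0) :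
    (invPowSpan (r : K)).toAddSubgroup =
      (invPowSpan (r : K)).toAddSubgroup.map (AddMonoidHom.mulLeft (s : K)) ⊔
        (Int.castAddHom K).range := by
  refine le_antisymm ?_ (sup_le ?_ ?_)
  · exact (Submodule.span_le (p := AddSubgroup.toIntSubmodule (_ ⊔ _))).mpr <|
      Set.range_subset_iff.mpr fun k => inv_pow_mem_map_mulLeft_sup_range_intCast hr hs k
  · rintro _ ⟨x, hx, rfl⟩
    show (s : K) * x ∈ invPowSpan (r : K)
    simpa only [zsmul_eq_mul] using (invPowSpan (r : K)).smul_mem s hx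
  · rintro _ ⟨a, rfl⟩
    simpa only [pow_zero, mul_one, Int.coe_castAddHom, Submodule.mem_toAddSubgroup] using intCast_mul_inv_pow_mem_invPowSpan (r : K) a 0

/-- For nonzero integers `r` and `s`, the subgroup `s·ℤ[1/r]` of the additive group
`ℤ[1/r] ⊆ ℚ` has finite index, at most `|s|`. -/
theorem stmt_14 (r s : ℤ) (hr : r ≠ 0) (hs : s ≠ 0) :
    (((Submodule.span ℤ (Set.range fun k : ℕ => ((r : ℚ)⁻¹ ^ k))).toAddSubgroup.map
        (AddMonoidHom.mulLeft (s : ℚ))).relIndex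
      (Submodule.span ℤ (Set.range fun k : ℕ => ((r : ℚ)⁻¹ ^ k))).toAddSubgroup ≤ s.natAbs) ∧
    (((Submodule.span ℤ (Set.range fun k : ℕ => ((r : ℚ)⁻¹ ^ k))).toAddSubgroup.map
        (AddMonoidHom.mulLeft (s : ℚ))).relIndex
      (Submodule.span ℤ (Set.range fun k : ℕ => ((r : ℚ)⁻¹ ^ k))).toAddSubgroup ≠ 0) := by
  have hdvd : ((invPowSpan (r : ℚ)).toAddSubgroup.map (AddMonoidHom.mulLeft (s : ℚ))).relIndex
      (invPowSpan (r : ℚ)).toAddSubgroup ∣ s.natAbs := by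
    refine AddSubgroup.relIndex_dvd_of_eq_sup_range
      (invPowSpan_toAddSubgroup_eq_map_mulLeft_sup_range_intCast (Int.cast_ne_zero.mpr hr) hs) ?_
    exact ⟨1, Submodule.subset_span ⟨0, pow_zero _⟩, mul_one _⟩
  exact ⟨Nat.le_of_dvd (Int.natAbs_pos.mpr hs) hdvd,
    ne_zero_of_dvd_ne_zero (Int.natAbs_ne_zero.mpr hs) hdvd⟩
end

section
/- Let V = ⋃_{i≥1} A^{-i} ℤ² ⊆ ℚ², where A is a 2×2 integer matrix with det(A) ≠ 0, and let W = ⋃_{i≥1} A^{-i}(pℤ)² for a prime p not dividing det(A). If w ∈ W is such that w/pˢ ∈ W for all s ≥ 1, then w = 0. -/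
/-!
Write `d = det A`. If `Aʲ (w / pˢ) ∈ (pℤ)²`, multiplying by the adjugate of `Aʲ` shows that
`dʲ w ∈ pˢ⁺¹ ℤ²`. Since `p ∤ dʲ`, the numerator of each coordinate of `w` is divisible by every
power of `p`, hence vanishes.
-/

open Matrix

theorem RingHom.map_det_smul_eq_map_adjugate_mulVec {n R S : Type*} [Fintype n] [DecidableEq n]
    [CommRing R] [CommRing S] (f : R →+* S) (M : Matrix n n R) {w : n → S} {u : n → R}
    (h : M.map f *ᵥ w = fun i => f (u i)) :
    f M.det • w = fun i => f ((M.adjugate *ᵥ u) i) := by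
  have hadj : M.adjugate.map f * M.map f = f M.det • (1 : Matrix n n S) := by
    rw [← Matrix.map_mul, adjugate_mul, Matrix.map_smul' _ _ _ (map_mul f),
      Matrix.map_one _ (map_zero f) (map_one f)]
  funext i
  rw [f.map_mulVec, Function.comp_def, ← h, mulVec_mulVec, hadj, smul_mulVec, one_mulVec]

theorem Rat.eq_zero_of_forall_exists_mul_eq_pow_mul {p : ℤ} (hp : Prime p) {x : ℚ}
    (h : ∀ s : ℕ, ∃ d m : ℤ, ¬ p ∣ d ∧ d * x = p ^ s * m) : x = 0 := by
  rw [← Rat.num_eq_zero]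
  by_contra hx
  refine FiniteMultiplicity.not_iff_forall.mpr (fun s => ?_) (.of_not_isUnit hp.not_isUnit hx)
  obtain ⟨d, m, hpd, hdx⟩ := h s
  have hnum : d * x.num = p ^ s * (m * x.den) := by
    have : (d * x.num : ℚ) = p ^ s * (m * x.den) := by
      rw [← Rat.mul_den_eq_num, ← mul_assoc, hdx, mul_assoc]
    exact_mod_cast this
  exact ((hp.coprime_iff_not_dvd.mpr hpd).pow_left).dvd_of_dvd_mul_left ⟨_, hnum⟩

theorem stmt_15_general (A : Matrix (Fin 2) (Fin 2) ℤ)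
    (p : ℕ) (hp : p.Prime) (hpd : ¬ ((p : ℤ) ∣ A.det))
    (w : Fin 2 → ℚ)
    (hws : ∀ s : ℕ, 1 ≤ s → ∃ i : ℕ, 1 ≤ i ∧ ∃ v : Fin 2 → ℤ,
      ((A.map (Int.cast : ℤ → ℚ)) ^ i).mulVec (fun j => w j / (p : ℚ) ^ s) =
        fun j => (p : ℚ) * (v j)) :
    w = 0 := by
  have hp' : Prime (p : ℤ) := Nat.prime_iff_prime_int.mp hp
  funext k
  refine Rat.eq_zero_of_forall_exists_mul_eq_pow_mul hp' fun s => ?_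
  obtain ⟨i, -, v, hv⟩ := hws (s + 1) (Nat.le_add_left 1 s)
  have hv' : (A ^ i).map (Int.castRingHom ℚ) *ᵥ (fun j => w j / (p : ℚ) ^ (s + 1)) =
      fun j => Int.castRingHom ℚ (p * v j) := by
    rw [Matrix.map_pow, Int.coe_castRingHom, hv]
    push_cast
    rfl
  have hk := congrFun ((Int.castRingHom ℚ).map_det_smul_eq_map_adjugate_mulVec _ hv') k
  refine ⟨A.det ^ i, p * ((A ^ i).adjugate *ᵥ fun j => p * v j) k,
    fun h => hpd (hp'.dvd_of_dvd_pow h), ?_⟩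
  simp only [det_pow, Pi.smul_apply, smul_eq_mul, map_pow, eq_intCast] at hk
  have hp0 : (p : ℚ) ≠ 0 := by exact_mod_cast hp.ne_zero
  field_simp at hk
  simp only [Int.cast_pow, Int.cast_mul, Int.cast_natCast]
  linear_combination hk

/-- Let `V = ⋃_{i≥1} A⁻ⁱ ℤ² ⊆ ℚ²` for a `2×2` integer matrix `A` with `det A ≠ 0`, and
`W = ⋃_{i≥1} A⁻ⁱ (pℤ)²` for a prime `p ∤ det A`; membership `w ∈ A⁻ⁱ(pℤ)²` means
`Aⁱ w ∈ (pℤ)²`. If `w ∈ W` and `w/pˢ ∈ W` for all `s ≥ 1`, then `w = 0`. -/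
theorem stmt_15 (A : Matrix (Fin 2) (Fin 2) ℤ) (hA : A.det ≠ 0)
    (p : ℕ) (hp : p.Prime) (hpd : ¬ ((p : ℤ) ∣ A.det))
    (w : Fin 2 → ℚ)
    (hw : ∃ i : ℕ, 1 ≤ i ∧ ∃ v : Fin 2 → ℤ,
      ((A.map (Int.cast : ℤ → ℚ)) ^ i).mulVec w = fun j => (p : ℚ) * (v j))
    (hws : ∀ s : ℕ, 1 ≤ s → ∃ i : ℕ, 1 ≤ i ∧ ∃ v : Fin 2 → ℤ,
      ((A.map (Int.cast : ℤ → ℚ)) ^ i).mulVec (fun j => w j / (p : ℚ) ^ s) =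
        fun j => (p : ℚ) * (v j)) :
    w = 0 :=
  stmt_15_general A p hp hpd w hws
end

section
/- Every ascending HNN extension G of ℤⁿ along an injective non-surjective endomorphism φ (given by an integer matrix with nonzero determinant) embeds into ℚⁿ ⋊ GL_n(ℚ), and hence into GL_{n+1}(ℚ); in particular G is linear over ℚ and residually finite. -/
/-!
Every element of an ascending HNN extension of `ℤⁿ` has the form `t⁻¹ ^ k * of g * t ^ m`.
Sending `g` to the translation by `g` and `t` to the linear map `M₀` defines a homomorphism into
`Rⁿ ⋊ GL_n(R)` for every ring `R` over which `M₀` is invertible. Over `ℚ` it is injective: the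
image of `t⁻¹ ^ k * of g * t ^ m` is trivial only if `g = 0` and `M₀ ^ m = M₀ ^ k`, and since
`|det M₀| ≥ 2` the latter forces `m = k`. Affine matrices embed `ℚⁿ ⋊ GL_n(ℚ)` into `GL_{n+1}(ℚ)`.
For residual finiteness, the `t`-exponent modulo `N` separates the elements with `m ≠ k` from `1`,
and the representation over `ZMod q`, for `q` coprime to `det M₀` and larger than a nonzero
coordinate of `g`, separates `t⁻¹ ^ k * of g * t ^ k`.
-/

/-- The natural action of `GL n R` on `Multiplicative (Rⁿ)` by matrix-vector
multiplication. -/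
def affAct (n : ℕ) (R : Type) [CommRing R] :
    GL (Fin n) R →* MulAut (Multiplicative (Fin n → R)) where
  toFun A :=
    { toFun := fun v =>
        Multiplicative.ofAdd ((A : Matrix (Fin n) (Fin n) R).mulVec v.toAdd)
      invFun := fun v =>
        Multiplicative.ofAdd (((A⁻¹ : GL (Fin n) R) : Matrix (Fin n) (Fin n) R).mulVec v.toAdd)
      left_inv := by
        intro v
        simp [Matrix.mulVec_mulVec]
      right_inv := by
        intro v
        simp [Matrix.mulVec_mulVec]
      map_mul' := by
        intro v w
        simp [Matrix.mulVec_add, ofAdd_add] }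
  map_one' := by
    ext v
    simp
  map_mul' := by
    intro A B
    ext v
    simp [Matrix.mulVec_mulVec]

theorem toAdd_affAct {n : ℕ} {R : Type} [CommRing R] (A : GL (Fin n) R)
    (v : Multiplicative (Fin n → R)) :
    (affAct n R A v).toAdd = (A : Matrix (Fin n) (Fin n) R).mulVec v.toAdd :=
  rfl

namespace HNNExtension

section TExponent

variable {G : Type*} [Group G] {A B : Subgroup G} (φ : A ≃* B)

def tExponentMod (N : ℕ) : HNNExtension G A B φ →* Multiplicative (ZMod N) :=
  lift 1 (Multiplicative.ofAdd 1) fun _ => by simp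

theorem tExponentMod_t_inv_pow_mul_of_mul_t_pow (N k m : ℕ) (g : G) :
    tExponentMod φ N (t⁻¹ ^ k * of g * t ^ m) = Multiplicative.ofAdd ((m - k : ℤ) : ZMod N) := by
  simp [tExponentMod, ← ofAdd_nsmul, ← ofAdd_neg, ← ofAdd_add, sub_eq_neg_add]

end TExponent

variable {G : Type*} [Group G] {B : Subgroup G} (e : (⊤ : Subgroup G) ≃* B)

def ascendingEndo : G →* G :=
  B.subtype.comp (e.toMonoidHom.comp Subgroup.topEquiv.symm.toMonoidHom)

theorem t_mul_of_top (g : G) :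
    (t : HNNExtension G ⊤ B e) * of g = of (ascendingEndo e g) * t :=
  t_mul_of (φ := e) ⟨g, Subgroup.mem_top g⟩

theorem t_pow_mul_of_top (j : ℕ) (g : G) :
    (t : HNNExtension G ⊤ B e) ^ j * of g = of ((ascendingEndo e)^[j] g) * t ^ j := by
  induction j generalizing g with
  | zero => simp
  | succ j ih =>
    rw [pow_succ, mul_assoc, t_mul_of_top, ← mul_assoc, ih, mul_assoc, ← pow_succ,
      ← Function.iterate_succ_apply]

theorem of_mul_t_inv_pow_top (j : ℕ) (g : G) :
    (of g : HNNExtension G ⊤ B e) * t⁻¹ ^ j = t⁻¹ ^ j * of ((ascendingEndo e)^[j] g) := by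
  rw [inv_pow, eq_inv_mul_iff_mul_eq, ← mul_assoc, t_pow_mul_of_top, mul_inv_cancel_right]

theorem exists_eq_t_inv_pow_mul_of_mul_t_pow (x : HNNExtension G ⊤ B e) :
    ∃ (k m : ℕ) (g : G), x = t⁻¹ ^ k * of g * t ^ m := by
  induction x using HNNExtension.induction_on with
  | of g => exact ⟨0, 0, g, by simp⟩
  | t => exact ⟨0, 1, 1, by simp⟩
  | inv x hx =>
    obtain ⟨k, m, g, rfl⟩ := hx
    exact ⟨m, k, g⁻¹, by rw [map_inv]; group⟩
  | mul x y hx hy =>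
    obtain ⟨k, m, g, rfl⟩ := hx
    obtain ⟨k', m', g', rfl⟩ := hy
    rcases le_total k' m with h | h
    · obtain ⟨j, rfl⟩ := Nat.exists_eq_add_of_le h
      refine ⟨k, j + m', g * (ascendingEndo e)^[j] g', ?_⟩
      calc t⁻¹ ^ k * of g * t ^ (k' + j) * (t⁻¹ ^ k' * of g' * t ^ m')
          = t⁻¹ ^ k * of g * (t ^ j * of g') * t ^ m' := by group
        _ = _ := by rw [t_pow_mul_of_top, map_mul]; group
    · obtain ⟨j, rfl⟩ := Nat.exists_eq_add_of_le h
      refine ⟨k + j, m', (ascendingEndo e)^[j] g * g', ?_⟩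
      calc t⁻¹ ^ k * of g * t ^ m * (t⁻¹ ^ (m + j) * of g' * t ^ m')
          = t⁻¹ ^ k * (of g * t⁻¹ ^ j) * of g' * t ^ m' := by group
        _ = _ := by rw [of_mul_t_inv_pow_top, map_mul]; group

end HNNExtension

namespace SemidirectProduct

variable {N H : Type*} [Group N] [Group H] {ψ : H →* MulAut N}

theorem inr_mul_inl_mul_inr_eq_one_iff (a b : H) (x : N) :
    (inr a * inl x * inr b : N ⋊[ψ] H) = 1 ↔ x = 1 ∧ a * b = 1 := by
  have h : (inr a * inl x * inr b : N ⋊[ψ] H) = inl (ψ a x) * inr (a * b) := by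
    simp [inl_aut, mul_assoc]
  simp [h, SemidirectProduct.ext_iff]

instance [Finite N] [Finite H] : Finite (N ⋊[ψ] H) :=
  Finite.of_injective (fun p => (p.left, p.right)) fun _ _ h =>
    SemidirectProduct.ext (congrArg Prod.fst h) (congrArg Prod.snd h)

end SemidirectProduct

theorem Int.exists_isCoprime_natAbs_lt {d : ℤ} (hd : d ≠ 0) (x : ℤ) :
    ∃ q : ℕ, IsCoprime (q : ℤ) d ∧ x.natAbs < q := by
  refine ⟨d.natAbs * x.natAbs + 1, ⟨1, -(d.sign * x.natAbs), ?_⟩, ?_⟩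
  · push_cast
    linear_combination (-|x|) * Int.sign_mul_self_eq_abs d
  · exact Nat.lt_succ_of_le (Nat.le_mul_of_pos_left _ (Int.natAbs_pos.2 hd))

theorem ZMod.intCast_ne_zero_of_natAbs_lt {N : ℕ} {x : ℤ} (hx : x ≠ 0) (h : x.natAbs < N) :
    (x : ZMod N) ≠ 0 := by
  rw [Ne, ZMod.intCast_zmod_eq_zero_iff_dvd]
  exact fun hdvd => hx (Int.eq_zero_of_dvd_of_natAbs_lt_natAbs hdvd (by simpa using h))

def intCastMulHom (n : ℕ) (R : Type*) [Ring R] :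
    Multiplicative (Fin n → ℤ) →* Multiplicative (Fin n → R) :=
  AddMonoidHom.toMultiplicative ((Int.castAddHom R).compLeft (Fin n))

theorem intCastMulHom_injective (n : ℕ) (R : Type*) [Ring R] [CharZero R] :
    Function.Injective (intCastMulHom n R) :=
  Int.cast_injective.comp_left

section AffineRep

open HNNExtension SemidirectProduct
open scoped Matrix

variable {n : ℕ} {M₀ : Matrix (Fin n) (Fin n) ℤ} {B : Subgroup (Multiplicative (Fin n → ℤ))}
  {e : (⊤ : Subgroup (Multiplicative (Fin n → ℤ))) ≃* B}
  (he : ∀ g, (e ⟨g, Subgroup.mem_top g⟩ : Multiplicative (Fin n → ℤ)).toAdd = M₀ *ᵥ g.toAdd)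
  {R : Type} [CommRing R] {M : GL (Fin n) R}
  (hM : (M : Matrix (Fin n) (Fin n) R) = M₀.map (Int.cast : ℤ → R))

include he hM in
theorem affAct_intCastMulHom (g : Multiplicative (Fin n → ℤ)) :
    affAct n R M (intCastMulHom n R g) = intCastMulHom n R (e ⟨g, Subgroup.mem_top g⟩) := by
  ext i
  rw [toAdd_affAct, hM]
  simp only [intCastMulHom, AddMonoidHom.coe_toMultiplicative, Function.comp_apply, toAdd_ofAdd,
    AddMonoidHom.compLeft_apply, he]
  exact ((Int.castRingHom R).map_mulVec M₀ g.toAdd i).symm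

def affineRep : HNNExtension (Multiplicative (Fin n → ℤ)) ⊤ B e →*
    Multiplicative (Fin n → R) ⋊[affAct n R] GL (Fin n) R :=
  lift (inl.comp (intCastMulHom n R)) (inr M) fun ⟨g, _⟩ => by
    simp [← affAct_intCastMulHom he hM, inl_aut, mul_assoc]

include he hM in
theorem affineRep_t_inv_pow_mul_of_mul_t_pow_eq_one_iff (k m : ℕ)
    (g : Multiplicative (Fin n → ℤ)) :
    affineRep he hM (t⁻¹ ^ k * of g * t ^ m) = 1 ↔ intCastMulHom n R g = 1 ∧ M ^ m = M ^ k := by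
  have h : affineRep he hM (t⁻¹ ^ k * of g * t ^ m) =
      inr (M⁻¹ ^ k) * inl (intCastMulHom n R g) * inr (M ^ m) := by
    simp [affineRep]
  rw [h, inr_mul_inl_mul_inr_eq_one_iff, inv_pow, inv_mul_eq_one, eq_comm (a := M ^ k)]

theorem affineRep_injective [CharZero R] (hdet : 1 < M₀.det.natAbs) :
    Function.Injective (affineRep he hM) := by
  refine (injective_iff_map_eq_one _).2 fun x hx => ?_
  obtain ⟨k, m, g, rfl⟩ := exists_eq_t_inv_pow_mul_of_mul_t_pow e x
  obtain ⟨hg, hMmk⟩ := (affineRep_t_inv_pow_mul_of_mul_t_pow_eq_one_iff he hM k m g).1 hx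
  have hdet_pow : M₀.det ^ m = M₀.det ^ k := by
    have := congrArg (fun A : GL (Fin n) R => (A : Matrix (Fin n) (Fin n) R).det) hMmk
    simp only [Units.val_pow_eq_pow_val, Matrix.det_pow, hM, ← Int.cast_det] at this
    exact_mod_cast this
  obtain rfl := Int.pow_right_injective hdet hdet_pow
  obtain rfl := intCastMulHom_injective n R (hg.trans (map_one _).symm)
  simp

include he in
theorem residuallyFinite_of_det_ne_zero (hdet : M₀.det ≠ 0) :
    Group.ResiduallyFinite (HNNExtension (Multiplicative (Fin n → ℤ)) ⊤ B e) := by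
  refine Group.residuallyFinite_of_forall_exists_finite_monoidHom fun x hx => ?_
  obtain ⟨k, m, g, rfl⟩ := exists_eq_t_inv_pow_mul_of_mul_t_pow e x
  obtain hmk | rfl := ne_or_eq m k
  · refine ⟨_, _, inferInstance, tExponentMod e ((m - k : ℤ).natAbs + 1), ?_⟩
    rw [tExponentMod_t_inv_pow_mul_of_mul_t_pow, Ne, ofAdd_eq_one]
    exact ZMod.intCast_ne_zero_of_natAbs_lt (sub_ne_zero.2 (mod_cast hmk)) (Nat.lt_succ_self _)
  · obtain ⟨i, hi⟩ : ∃ i, g.toAdd i ≠ 0 := by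
      refine Function.ne_iff.1 fun hg => hx ?_
      rw [show g = 1 from hg]
      simp
    obtain ⟨q, hcop, hlt⟩ := Int.exists_isCoprime_natAbs_lt hdet (g.toAdd i)
    have : NeZero q := ⟨by omega⟩
    have hunit : IsUnit (M₀.map (Int.cast : ℤ → ZMod q)).det := by
      rw [← Int.cast_det, ZMod.coe_int_isUnit_iff_isCoprime]
      exact hcop
    refine ⟨_, _, inferInstance, affineRep he (M := .mk'' _ hunit) rfl, fun h1 => ?_⟩
    have hg := ((affineRep_t_inv_pow_mul_of_mul_t_pow_eq_one_iff he _ m m g).1 h1).1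
    exact ZMod.intCast_ne_zero_of_natAbs_lt hi hlt (congrFun (congrArg Multiplicative.toAdd hg) i)

end AffineRep

section AffineMatrix

open Matrix

variable (n : ℕ) (R : Type) [CommRing R]

def affineMatrixHom : Multiplicative (Fin n → R) ⋊[affAct n R] GL (Fin n) R →*
    Matrix (Fin n ⊕ Fin 1) (Fin n ⊕ Fin 1) R where
  toFun p := fromBlocks p.right (replicateCol (Fin 1) p.left.toAdd) 0 1
  map_one' := by simp
  map_mul' p q := by
    simp [fromBlocks_multiply, toAdd_affAct, ← replicateCol_mulVec, add_comm]

theorem affineMatrixHom_injective : Function.Injective (affineMatrixHom n R) := by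
  intro p q h
  obtain ⟨hA, hv, -, -⟩ := fromBlocks_inj.1 h
  exact SemidirectProduct.ext (congrArg Multiplicative.ofAdd (replicateCol_injective hv))
    (Units.ext hA)

def affineGL : Multiplicative (Fin n → R) ⋊[affAct n R] GL (Fin n) R →* GL (Fin (n + 1)) R :=
  (Units.map (reindexAlgEquiv R R finSumFinEquiv).toMonoidHom).comp
    (affineMatrixHom n R).toHomUnits

theorem affineGL_injective : Function.Injective (affineGL n R) :=
  (Units.map_injective (reindexAlgEquiv R R finSumFinEquiv).injective).comp
    fun _ _ h => affineMatrixHom_injective n R (congrArg Units.val h)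

end AffineMatrix

open scoped Matrix in
theorem one_lt_natAbs_det_of_not_surjective {n : ℕ} {M₀ : Matrix (Fin n) (Fin n) ℤ}
    {φ : Multiplicative (Fin n → ℤ) →* Multiplicative (Fin n → ℤ)}
    (hφ : ∀ v : Fin n → ℤ, (φ (Multiplicative.ofAdd v)).toAdd = M₀ *ᵥ v)
    (hdet : M₀.det ≠ 0) (hnsurj : ¬ Function.Surjective φ) : 1 < M₀.det.natAbs := by
  refine Nat.one_lt_iff_ne_zero_and_ne_one.2 ⟨Int.natAbs_ne_zero.2 hdet, fun h1 => hnsurj ?_⟩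
  have hM₀ : Function.Surjective M₀.mulVec := Matrix.mulVec_surjective_iff_isUnit.2
    (M₀.isUnit_iff_isUnit_det.2 (Int.isUnit_iff_natAbs_eq.2 h1))
  intro w
  obtain ⟨v, hv⟩ := hM₀ w.toAdd
  exact ⟨Multiplicative.ofAdd v, Multiplicative.toAdd.injective ((hφ v).trans hv)⟩

theorem stmt_18_general (n : ℕ) (M₀ : Matrix (Fin n) (Fin n) ℤ) (hdet : M₀.det ≠ 0)
    (φ : Multiplicative (Fin n → ℤ) →* Multiplicative (Fin n → ℤ))
    (hφ : ∀ v : Fin n → ℤ, (φ (Multiplicative.ofAdd v)).toAdd = M₀.mulVec v)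
    (hnsurj : ¬ Function.Surjective φ)
    (e : (⊤ : Subgroup (Multiplicative (Fin n → ℤ))) ≃* φ.range)
    (he : ∀ g, (e ⟨g, Subgroup.mem_top g⟩ : Multiplicative (Fin n → ℤ)) = φ g) :
    (∃ f : HNNExtension (Multiplicative (Fin n → ℤ)) ⊤ φ.range e →*
        (Multiplicative (Fin n → ℚ)) ⋊[affAct n ℚ] GL (Fin n) ℚ,
      Function.Injective f) ∧
    (∃ f : HNNExtension (Multiplicative (Fin n → ℤ)) ⊤ φ.range e →* GL (Fin (n + 1)) ℚ,
      Function.Injective f) ∧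
    (∀ g : HNNExtension (Multiplicative (Fin n → ℤ)) ⊤ φ.range e, g ≠ 1 →
      ∃ K : Subgroup (HNNExtension (Multiplicative (Fin n → ℤ)) ⊤ φ.range e),
        K.Normal ∧ K.FiniteIndex ∧ g ∉ K) := by
  have he' (g : Multiplicative (Fin n → ℤ)) :
      (e ⟨g, Subgroup.mem_top g⟩ : Multiplicative (Fin n → ℤ)).toAdd = M₀.mulVec g.toAdd := by
    rw [he]; exact hφ g.toAdd
  have hdetℚ : (M₀.map (Int.cast : ℤ → ℚ)).det ≠ 0 := by
    rw [← Int.cast_det]; exact_mod_cast hdet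
  have hinj := affineRep_injective he' (M := .mkOfDetNeZero _ hdetℚ) rfl
    (one_lt_natAbs_det_of_not_surjective hφ hdet hnsurj)
  refine ⟨⟨_, hinj⟩, ⟨(affineGL n ℚ).comp _, (affineGL_injective n ℚ).comp hinj⟩, fun g hg => ?_⟩
  have := residuallyFinite_of_det_ne_zero he' hdet
  obtain ⟨K, hK⟩ := Group.exists_finiteIndexNormalSubgroup_notMem g hg
  exact ⟨K, K.isNormal', K.isFiniteIndex', hK⟩

/-- Every ascending HNN extension `G` of `ℤⁿ` along an injective non-surjective
endomorphism `φ` (given by an integer matrix `M₀` with nonzero determinant) embeds into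
`ℚⁿ ⋊ GL_n(ℚ)`, hence into `GL_{n+1}(ℚ)`; in particular `G` is linear over `ℚ` and
residually finite. -/
theorem stmt_18 (n : ℕ) (M₀ : Matrix (Fin n) (Fin n) ℤ) (hdet : M₀.det ≠ 0)
    (φ : Multiplicative (Fin n → ℤ) →* Multiplicative (Fin n → ℤ))
    (hφ : ∀ v : Fin n → ℤ, (φ (Multiplicative.ofAdd v)).toAdd = M₀.mulVec v)
    (hinj : Function.Injective φ) (hnsurj : ¬ Function.Surjective φ)
    (hfi : φ.range.FiniteIndex)
    (e : (⊤ : Subgroup (Multiplicative (Fin n → ℤ))) ≃* φ.range)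
    (he : ∀ g, (e ⟨g, Subgroup.mem_top g⟩ : Multiplicative (Fin n → ℤ)) = φ g) :
    (∃ f : HNNExtension (Multiplicative (Fin n → ℤ)) ⊤ φ.range e →*
        (Multiplicative (Fin n → ℚ)) ⋊[affAct n ℚ] GL (Fin n) ℚ,
      Function.Injective f) ∧
    (∃ f : HNNExtension (Multiplicative (Fin n → ℤ)) ⊤ φ.range e →* GL (Fin (n + 1)) ℚ,
      Function.Injective f) ∧
    (∀ g : HNNExtension (Multiplicative (Fin n → ℤ)) ⊤ φ.range e, g ≠ 1 →
      ∃ K : Subgroup (HNNExtension (Multiplicative (Fin n → ℤ)) ⊤ φ.range e),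
        K.Normal ∧ K.FiniteIndex ∧ g ∉ K) :=
  stmt_18_general n M₀ hdet φ hφ hnsurj e he
end
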